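/- For every n ≥ 3 there exists δ ∈ ℝ^(n choose 2) such that the set C(δ, U_n) of l∞-closest ultrametrics to δ is convex and its affine hull has dimension n − 2. -/

import Mathlib

/-!
Write `n = m + 2` and let `δ_ij = 2 max(i, j)`, except `δ_{0,n-1} = 2 (n - 1) + 1`.
If an ultrametric `u` is within `ε` of `δ`, the triangle `{0, 1, n - 1}` gives
`u_{0,n-1} ≤ max(u_01, u_{1,n-1}) ≤ 2 (n - 1) + ε`, so `ε ≥ 1/2`. At distance exactly `1/2`
this pins `u_{0,n-1} = 2 (n - 1) + 1/2`, and since the two largest sides of an ultrametric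
triangle agree, `u_ac = u_0c` for `0 < a < c`. Hence `u_ij = g (max(i, j))` with
`|g c - 2 c| ≤ 1/2` and `g (n - 1) = 2 (n - 1) + 1/2`; conversely every such `g` is monotone
and gives a closest ultrametric. The free values `g 1, …, g (n - 2)` exhibit `C(δ, U_n)` as an
injective affine image of a cube in `ℝ^(n-2)`.
-/

/-- Index set for unordered pairs of distinct elements of `{1,…,n}`: ordered pairs
`(i, j)` with `i < j`. -/
abbrev PairIdx (n : ℕ) := {p : Fin n × Fin n // p.1 < p.2}

/-- A dissimilarity map on `n` elements: a point of `ℝ^(n choose 2)`, viewed as a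
real-valued function on unordered pairs of distinct elements.  The product metric on this
type is exactly the `l∞`-metric. -/
abbrev DissimMap (n : ℕ) := PairIdx n → ℝ

/-- The value of a dissimilarity map on the unordered pair `{i, j}` (zero if `i = j`). -/
def dm {n : ℕ} (u : DissimMap n) (i j : Fin n) : ℝ :=
  if h : i < j then u ⟨(i, j), h⟩ else if h' : j < i then u ⟨(j, i), h'⟩ else 0

/-- The set of ultrametrics on `n` elements. -/
def Ultrametrics (n : ℕ) : Set (DissimMap n) :=
  {u | ∀ i j k : Fin n, i ≠ j → i ≠ k → j ≠ k → dm u i j ≤ max (dm u i k) (dm u j k)}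

/-- The set of points of `S` that are `l∞`-closest to `x`. -/
noncomputable def closestPts {n : ℕ} (x : DissimMap n) (S : Set (DissimMap n)) :
    Set (DissimMap n) :=
  {y ∈ S | dist x y = Metric.infDist x S}

/-- Build a dissimilarity map from a matrix of values. -/
def ofMat {n : ℕ} (A : Matrix (Fin n) (Fin n) ℝ) : DissimMap n := fun p => A p.1.1 p.1.2

open Set Metric Pointwise

section General

variable {n : ℕ}

lemma dm_of_lt (u : DissimMap n) {i j : Fin n} (h : i < j) : dm u i j = u ⟨(i, j), h⟩ :=
  dif_pos h

lemma dm_comm (u : DissimMap n) (i j : Fin n) : dm u i j = dm u j i := by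
  unfold dm
  rcases lt_trichotomy i j with h | rfl | h
  · rw [dif_pos h, dif_neg h.not_gt, dif_pos h]
  · rfl
  · rw [dif_neg h.not_gt, dif_pos h, dif_pos h]

lemma le_max_of_mem_ultrametrics {u : DissimMap n} (hu : u ∈ Ultrametrics n) {a b c : Fin n}
    (hab : a < b) (hbc : b < c) :
    u ⟨(a, c), hab.trans hbc⟩ ≤ max (u ⟨(a, b), hab⟩) (u ⟨(b, c), hbc⟩) := by
  have h := hu a c b (hab.trans hbc).ne hab.ne hbc.ne'
  rwa [dm_of_lt u (hab.trans hbc), dm_of_lt u hab, dm_comm u c b, dm_of_lt u hbc] at h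

lemma eq_of_mem_ultrametrics_of_lt {u : DissimMap n} (hu : u ∈ Ultrametrics n) {a b c : Fin n}
    (hab : a < b) (hbc : b < c) (h : u ⟨(a, b), hab⟩ < u ⟨(b, c), hbc⟩) :
    u ⟨(a, c), hab.trans hbc⟩ = u ⟨(b, c), hbc⟩ := by
  have hac := le_max_of_mem_ultrametrics hu hab hbc
  rw [max_eq_right h.le] at hac
  have hbc' := hu b c a hbc.ne hab.ne' (hab.trans hbc).ne'
  rw [dm_of_lt u hbc, dm_comm u b a, dm_of_lt u hab, dm_comm u c a,
    dm_of_lt u (hab.trans hbc)] at hbc'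
  exact le_antisymm hac ((le_max_iff.1 hbc').resolve_left h.not_ge)

variable (n) in
def ofMax : (Fin n → ℝ) →ₗ[ℝ] DissimMap n := LinearMap.funLeft ℝ ℝ fun p => p.1.2

lemma ofMax_apply (g : Fin n → ℝ) (p : PairIdx n) : ofMax n g p = g p.1.2 := rfl

lemma dm_ofMax (g : Fin n → ℝ) {i j : Fin n} (h : i ≠ j) :
    dm (ofMax n g) i j = g (max i j) := by
  rcases h.lt_or_gt with h | h
  · rw [dm_of_lt _ h, max_eq_right h.le, ofMax_apply]
  · rw [dm_comm, dm_of_lt _ h, max_eq_left h.le, ofMax_apply]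

lemma ofMax_mem_ultrametrics {g : Fin n → ℝ} (hg : Monotone g) : ofMax n g ∈ Ultrametrics n := by
  intro i j k hij hik hjk
  rw [dm_ofMax g hij, dm_ofMax g hik, dm_ofMax g hjk, ← hg.map_max]
  exact hg (max_le (le_max_of_le_left (le_max_left i k)) (le_max_of_le_right (le_max_left j k)))

lemma monotone_of_abs_sub_two_mul_le {g : Fin n → ℝ} (hg : ∀ c, |g c - 2 * (c : ℕ)| ≤ 1 / 2) :
    Monotone g := by
  intro a b hab
  rcases hab.eq_or_lt with rfl | hab
  · rfl
  have hab_real : ((a : ℕ) : ℝ) + 1 ≤ (b : ℕ) := by exact_mod_cast Fin.lt_def.1 hab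
  linarith [(abs_le.1 (hg a)).2, (abs_le.1 (hg b)).1]

lemma abs_sub_apply_le_dist (x y : DissimMap n) (p : PairIdx n) : |x p - y p| ≤ dist x y := by
  simpa only [Real.dist_eq] using dist_le_pi_dist x y p

lemma closestPts_eq_of_forall_le {x y₀ : DissimMap n} {S : Set (DissimMap n)} {r : ℝ}
    (hy₀ : y₀ ∈ S) (hxy₀ : dist x y₀ ≤ r) (hS : ∀ y ∈ S, r ≤ dist x y) :
    closestPts x S = {y ∈ S | dist x y ≤ r} := by
  have hr : infDist x S = r :=
    le_antisymm ((infDist_le_dist_of_mem hy₀).trans hxy₀) ((le_infDist ⟨y₀, hy₀⟩).2 hS)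
  rw [closestPts, hr]
  ext y
  exact and_congr_right fun hy => ⟨le_of_eq, fun h => le_antisymm h (hS y hy)⟩

end General

namespace ClosestUltrametric

variable {m : ℕ}

def apex (m : ℕ) : PairIdx (m + 2) := ⟨(0, Fin.last (m + 1)), Fin.last_pos⟩

def delta (m : ℕ) : DissimMap (m + 2) :=
  ofMax (m + 2) (fun c => 2 * (c : ℕ)) + Pi.single (apex m) 1

lemma delta_apex : delta m (apex m) = 2 * (m + 1) + 1 := by
  simp [delta, ofMax_apply, apex]

lemma delta_apply_of_ne {p : PairIdx (m + 2)} (hp : p ≠ apex m) :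
    delta m p = 2 * (p.1.2 : ℕ) := by
  simp [delta, ofMax_apply, hp]

lemma ne_apex_of_fst_ne {p : PairIdx (m + 2)} (h : p.1.1 ≠ 0) : p ≠ apex m := by
  rintro rfl; exact h rfl

lemma ne_apex_of_snd_ne {p : PairIdx (m + 2)} (h : p.1.2 ≠ Fin.last (m + 1)) : p ≠ apex m := by
  rintro rfl; exact h rfl

def mid (m : ℕ) (j : Fin m) : Fin (m + 2) := j.castSucc.succ

lemma mid_injective : Function.Injective (mid m) :=
  (Fin.succ_injective _).comp (Fin.castSucc_injective _)

lemma mid_ne_last (j : Fin m) : mid m j ≠ Fin.last (m + 1) := by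
  simp [mid, Fin.ext_iff, j.isLt.ne]

lemma not_exists_mid_eq_last : ¬∃ j, mid m j = Fin.last (m + 1) :=
  fun ⟨j, hj⟩ => mid_ne_last j hj

lemma exists_mid_eq {c : Fin (m + 2)} (h0 : c ≠ 0) (hlast : c ≠ Fin.last (m + 1)) :
    ∃ j, mid m j = c := by
  obtain ⟨c, hc⟩ := c
  have h0 : c ≠ 0 := fun h => h0 (Fin.ext h)
  have hlast : c ≠ m + 1 := fun h => hlast (Fin.ext h)
  exact ⟨⟨c - 1, by omega⟩, Fin.ext (by simp [mid]; omega)⟩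

lemma apply_apex_le_of_mem_ultrametrics (hm : 1 ≤ m) {u : DissimMap (m + 2)}
    (hu : u ∈ Ultrametrics (m + 2)) : u (apex m) ≤ 2 * (m + 1) + dist (delta m) u := by
  have h01 : (0 : Fin (m + 2)) < 1 := Fin.zero_lt_one
  have h1l : (1 : Fin (m + 2)) < Fin.last (m + 1) := by simp [Fin.lt_def]; omega
  have hmax := le_max_of_mem_ultrametrics hu h01 h1l
  have b01 := abs_sub_apply_le_dist (delta m) u ⟨(0, 1), h01⟩
  have b1l := abs_sub_apply_le_dist (delta m) u ⟨(1, Fin.last (m + 1)), h1l⟩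
  rw [delta_apply_of_ne (ne_apex_of_snd_ne h1l.ne), abs_le] at b01
  rw [delta_apply_of_ne (ne_apex_of_fst_ne (Fin.zero_lt_one.ne')), abs_le] at b1l
  have hm' : (1 : ℝ) ≤ m := by exact_mod_cast hm
  simp only [Fin.val_one, Fin.val_last, Nat.cast_one, Nat.cast_add] at b01 b1l
  exact hmax.trans (max_le (by linarith) (by linarith))

lemma half_le_dist_delta (hm : 1 ≤ m) {u : DissimMap (m + 2)} (hu : u ∈ Ultrametrics (m + 2)) :
    1 / 2 ≤ dist (delta m) u := by
  have hapex := abs_sub_apply_le_dist (delta m) u (apex m)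
  rw [delta_apex, abs_le] at hapex
  linarith [apply_apex_le_of_mem_ultrametrics hm hu]

lemma apply_apex_of_dist_le (hm : 1 ≤ m) {u : DissimMap (m + 2)}
    (hu : u ∈ Ultrametrics (m + 2)) (hd : dist (delta m) u ≤ 1 / 2) :
    u (apex m) = 2 * (m + 1) + 1 / 2 := by
  have hapex := abs_sub_apply_le_dist (delta m) u (apex m)
  rw [delta_apex, abs_le] at hapex
  linarith [apply_apex_le_of_mem_ultrametrics hm hu]

lemma apply_eq_apply_zero_of_dist_le {u : DissimMap (m + 2)} (hu : u ∈ Ultrametrics (m + 2))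
    (hd : dist (delta m) u ≤ 1 / 2) {a c : Fin (m + 2)} (hac : a < c) :
    u ⟨(a, c), hac⟩ = u ⟨(0, c), (Fin.zero_le a).trans_lt hac⟩ := by
  rcases (Fin.zero_le a).eq_or_lt with rfl | ha
  · rfl
  refine (eq_of_mem_ultrametrics_of_lt hu ha hac ?_).symm
  have h0a := abs_sub_apply_le_dist (delta m) u ⟨(0, a), ha⟩
  have hac' := abs_sub_apply_le_dist (delta m) u ⟨(a, c), hac⟩
  rw [delta_apply_of_ne (ne_apex_of_snd_ne (hac.trans_le (Fin.le_last c)).ne), abs_le] at h0a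
  rw [delta_apply_of_ne (ne_apex_of_fst_ne ha.ne'), abs_le] at hac'
  have hac_real : ((a : ℕ) : ℝ) + 1 ≤ (c : ℕ) := by exact_mod_cast Fin.lt_def.1 hac
  linarith

noncomputable def base (m : ℕ) : Fin (m + 2) → ℝ :=
  fun c => 2 * (c : ℕ) + Pi.single (M := fun _ => ℝ) (Fin.last (m + 1)) (1 / 2) c

noncomputable def center (m : ℕ) : DissimMap (m + 2) := ofMax (m + 2) (base m)

noncomputable def perturb (m : ℕ) : (Fin m → ℝ) →ₗ[ℝ] DissimMap (m + 2) :=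
  ofMax (m + 2) ∘ₗ Function.ExtendByZero.linearMap ℝ (mid m)

lemma center_add_perturb (t : Fin m → ℝ) :
    center m + perturb m t = ofMax (m + 2) (base m + Function.extend (mid m) t 0) := by
  rw [map_add]; rfl

lemma perturb_injective : Function.Injective (perturb m) := by
  intro s t h
  funext j
  simpa [perturb, ofMax_apply, mid_injective.extend_apply] using
    congrFun h ⟨(0, mid m j), Fin.succ_pos _⟩

lemma base_add_extend_last (t : Fin m → ℝ) :
    (base m + Function.extend (mid m) t 0) (Fin.last (m + 1)) = 2 * (m + 1) + 1 / 2 := by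
  simp [base, Function.extend_apply' _ _ _ not_exists_mid_eq_last]

lemma abs_base_add_extend_sub_le {t : Fin m → ℝ} (ht : t ∈ closedBall 0 (1 / 2))
    (c : Fin (m + 2)) : |(base m + Function.extend (mid m) t 0) c - 2 * (c : ℕ)| ≤ 1 / 2 := by
  by_cases hc : c = Fin.last (m + 1)
  · subst hc
    rw [base_add_extend_last]
    norm_num [abs_of_pos]
  rw [Pi.add_apply, base, Pi.single_eq_of_ne hc, add_zero, add_sub_cancel_left]
  by_cases hj : ∃ j, mid m j = c
  · obtain ⟨j, rfl⟩ := hj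
    rw [mid_injective.extend_apply, ← Real.norm_eq_abs]
    exact (norm_le_pi_norm t j).trans (mem_closedBall_zero_iff.1 ht)
  · rw [Function.extend_apply' _ _ _ hj]
    norm_num

lemma center_add_perturb_mem_ultrametrics {t : Fin m → ℝ} (ht : t ∈ closedBall 0 (1 / 2)) :
    center m + perturb m t ∈ Ultrametrics (m + 2) := by
  rw [center_add_perturb]
  exact ofMax_mem_ultrametrics (monotone_of_abs_sub_two_mul_le (abs_base_add_extend_sub_le ht))

lemma dist_delta_center_add_perturb_le {t : Fin m → ℝ} (ht : t ∈ closedBall 0 (1 / 2)) :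
    dist (delta m) (center m + perturb m t) ≤ 1 / 2 := by
  rw [center_add_perturb, dist_pi_le_iff (by norm_num)]
  intro p
  rw [Real.dist_eq, ofMax_apply]
  by_cases hp : p = apex m
  · subst hp
    rw [delta_apex, apex, base_add_extend_last]
    norm_num [abs_of_pos]
  · rw [delta_apply_of_ne hp, abs_sub_comm]
    exact abs_base_add_extend_sub_le ht _

lemma exists_eq_center_add_perturb (hm : 1 ≤ m) {u : DissimMap (m + 2)}
    (hu : u ∈ Ultrametrics (m + 2)) (hd : dist (delta m) u ≤ 1 / 2) :
    ∃ t ∈ closedBall (0 : Fin m → ℝ) (1 / 2), center m + perturb m t = u := by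
  refine ⟨fun j => u ⟨(0, mid m j), Fin.succ_pos _⟩ - 2 * (mid m j : ℕ), ?_, ?_⟩
  · rw [mem_closedBall_zero_iff, pi_norm_le_iff_of_nonneg (by norm_num)]
    intro j
    have h := abs_sub_apply_le_dist (delta m) u ⟨(0, mid m j), Fin.succ_pos _⟩
    rw [delta_apply_of_ne (ne_apex_of_snd_ne (mid_ne_last j)), abs_sub_comm] at h
    exact (Real.norm_eq_abs _).trans_le (h.trans hd)
  · funext ⟨⟨a, c⟩, hac⟩
    rw [center_add_perturb, ofMax_apply, apply_eq_apply_zero_of_dist_le hu hd hac, Pi.add_apply,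
      base]
    by_cases hc : c = Fin.last (m + 1)
    · subst hc
      rw [Pi.single_eq_same, Function.extend_apply' _ _ _ not_exists_mid_eq_last]
      rw [show u ⟨(0, Fin.last (m + 1)), _⟩ = u (apex m) from rfl, apply_apex_of_dist_le hm hu hd]
      simp
    · obtain ⟨j, rfl⟩ := exists_mid_eq ((Fin.zero_le a).trans_lt hac).ne' hc
      rw [Pi.single_eq_of_ne hc, mid_injective.extend_apply]
      ring

theorem closestPts_delta (hm : 1 ≤ m) :
    closestPts (delta m) (Ultrametrics (m + 2)) =
      center m +ᵥ perturb m '' closedBall 0 (1 / 2) := by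
  have h0 : (0 : Fin m → ℝ) ∈ closedBall 0 (1 / 2) := mem_closedBall_self (by norm_num)
  rw [closestPts_eq_of_forall_le (center_add_perturb_mem_ultrametrics h0)
    (dist_delta_center_add_perturb_le h0) fun u hu => half_le_dist_delta hm hu]
  ext u
  simp only [mem_vadd_set, mem_image, vadd_eq_add]
  constructor
  · rintro ⟨hu, hd⟩
    obtain ⟨t, ht, rfl⟩ := exists_eq_center_add_perturb hm hu hd
    exact ⟨_, ⟨t, ht, rfl⟩, rfl⟩
  · rintro ⟨_, ⟨t, ht, rfl⟩, rfl⟩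
    exact ⟨center_add_perturb_mem_ultrametrics ht, dist_delta_center_add_perturb_le ht⟩

lemma finrank_vectorSpan_center_vadd_perturb_image :
    Module.finrank ℝ (vectorSpan ℝ (center m +ᵥ perturb m '' closedBall 0 (1 / 2))) = m := by
  have hspan : affineSpan ℝ (closedBall (0 : Fin m → ℝ) (1 / 2)) = ⊤ :=
    (convex_closedBall 0 _).interior_nonempty_iff_affineSpan_eq_top.1
      ((nonempty_ball.2 (by norm_num : (0 : ℝ) < 1 / 2)).mono ball_subset_interior_closedBall)
  rw [vectorSpan_vadd, ← LinearMap.coe_toAffineMap, ← AffineMap.map_vectorSpan,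
    LinearMap.toAffineMap_linear, ← direction_affineSpan, hspan, AffineSubspace.direction_top,
    Submodule.map_top, LinearMap.finrank_range_of_inj perturb_injective, Module.finrank_fin_fun]

end ClosestUltrametric

/-- for every `n ≥ 3` there is a dissimilarity map whose set of
`l∞`-closest ultrametrics is convex of dimension `n - 2`. -/
theorem exists_closest_ultrametrics_dim (n : ℕ) (hn : 3 ≤ n) :
    ∃ δ : DissimMap n,
      Convex ℝ (closestPts δ (Ultrametrics n)) ∧
      Module.finrank ℝ (affineSpan ℝ (closestPts δ (Ultrametrics n))).direction = n - 2 := by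
  obtain ⟨m, rfl⟩ : ∃ m, n = m + 2 := ⟨n - 2, by omega⟩
  refine ⟨ClosestUltrametric.delta m, ?_, ?_⟩ <;>
    rw [ClosestUltrametric.closestPts_delta (by omega)]
  · exact ((convex_closedBall 0 _).linear_image _).vadd _
  · rw [direction_affineSpan, ClosestUltrametric.finrank_vectorSpan_center_vadd_perturb_image,
      Nat.add_sub_cancel]
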